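/- arXiv:1010.0618 — 4 statements merged into one kernel-verified Lean document; each statement's English description precedes it below -/
import Mathlib

section
/- For p > 1, d ∈ (-1,1), α = 2/(p-1), and x ∈ (0, 1/|d|) (any x > 0 if d = 0), the bound ∫_{-1}^{1} Y²(1-Y²)^{α}/(1 - x²d²Y²) dY ≤ (4/((3p+1)(1-x²d²))) ∫_{-1}^{1} Y²(1-Y²)^{α-1} dY holds. -/
/-!
Each denominator is at least `1 - x²d²`, and integrating `Y ↦ -Y³ (1 - Y²)^α` by parts gives
`∫ Y² (1 - Y²)^α = 2α / (2α + 3) · ∫ Y² (1 - Y²)^(α - 1)`; for `α = 2 / (p - 1)` the factor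
`2α / (2α + 3)` is `4 / (3p + 1)`.
-/

open MeasureTheory intervalIntegral Set

theorem integral_eq_sub_of_hasDerivAt_of_nonneg {g g' : ℝ → ℝ} {a b : ℝ} (hab : a ≤ b)
    (hcont : ContinuousOn g (Icc a b)) (hderiv : ∀ x ∈ Ioo a b, HasDerivAt g (g' x) x)
    (hpos : ∀ x ∈ Ioo a b, 0 ≤ g' x) : ∫ x in a..b, g' x = g b - g a := by
  refine integral_eq_sub_of_hasDerivAt_of_le hab hcont hderiv ?_
  rw [← uIcc_of_le hab] at hcont
  exact intervalIntegrable_deriv_of_nonneg hcont (by simpa [hab] using hderiv)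
    (by simpa [hab] using hpos)

theorem one_sub_sq_nonneg {Y : ℝ} (hY : Y ∈ Icc (-1 : ℝ) 1) : 0 ≤ 1 - Y ^ 2 :=
  sub_nonneg.2 ((sq_le_one_iff_abs_le_one Y).2 (abs_le.2 hY))

section
variable {α : ℝ}

theorem continuous_one_sub_sq_rpow (hα : 0 ≤ α) : Continuous fun Y : ℝ => (1 - Y ^ 2) ^ α :=
  continuous_iff_continuousAt.2 fun _ =>
    (continuousAt_const.sub (continuous_pow 2).continuousAt).rpow_const (Or.inr hα)

theorem hasDerivAt_neg_pow_three_mul_one_sub_sq_rpow {Y : ℝ} (hY : Y ∈ Ioo (-1 : ℝ) 1) :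
    HasDerivAt (fun Y : ℝ => -(Y ^ 3 * (1 - Y ^ 2) ^ α))
      (2 * α * (Y ^ 2 * (1 - Y ^ 2) ^ (α - 1)) - (2 * α + 3) * (Y ^ 2 * (1 - Y ^ 2) ^ α)) Y := by
  have hpos : 0 < 1 - Y ^ 2 := by nlinarith [hY.1, hY.2]
  have hbase : HasDerivAt (fun Y : ℝ => 1 - Y ^ 2) (-(2 * Y)) Y := by
    simpa using (hasDerivAt_pow 2 Y).const_sub 1
  refine (((hasDerivAt_pow 3 Y).mul (hbase.rpow_const (Or.inl hpos.ne'))).neg).congr_deriv ?_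
  have hsplit : (1 - Y ^ 2) ^ α = (1 - Y ^ 2) ^ (α - 1) * (1 - Y ^ 2) := by
    rw [← Real.rpow_add_one hpos.ne', sub_add_cancel]
  rw [hsplit]
  norm_num
  ring

/-- The function `H y = -y³ (1 - y²)^α + (2α + 3) ∫_{-1}^y Y² (1 - Y²)^α` has the nonnegative
derivative `2α Y² (1 - Y²)^(α - 1)`, so the fundamental theorem of calculus applies to it without
knowing in advance that `(1 - Y²)^(α - 1)` is integrable when `α < 1`. -/
theorem integral_sq_mul_one_sub_sq_rpow (hα : 0 < α) :
    ∫ Y in (-1 : ℝ)..1, Y ^ 2 * (1 - Y ^ 2) ^ α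
      = 2 * α / (2 * α + 3) * ∫ Y in (-1 : ℝ)..1, Y ^ 2 * (1 - Y ^ 2) ^ (α - 1) := by
  set f : ℝ → ℝ := fun Y => Y ^ 2 * (1 - Y ^ 2) ^ α
  have hf : Continuous f := (continuous_pow 2).mul (continuous_one_sub_sq_rpow hα.le)
  set H : ℝ → ℝ := fun y => -(y ^ 3 * (1 - y ^ 2) ^ α) + (2 * α + 3) * ∫ Y in (-1 : ℝ)..y, f Y
  have hH : ContinuousOn H (Icc (-1) 1) :=
    ((((continuous_pow 3).mul (continuous_one_sub_sq_rpow hα.le)).neg).add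
      (continuous_const.mul (continuous_primitive (fun _ _ => hf.intervalIntegrable _ _) _)))
      |>.continuousOn
  have hH' : ∀ Y ∈ Ioo (-1 : ℝ) 1, HasDerivAt H (2 * α * (Y ^ 2 * (1 - Y ^ 2) ^ (α - 1))) Y := by
    intro Y hY
    refine ((hasDerivAt_neg_pow_three_mul_one_sub_sq_rpow hY).add
      ((hf.integral_hasStrictDerivAt (-1) Y).hasDerivAt.const_mul (2 * α + 3))).congr_deriv ?_
    ring
  have hH'_nonneg : ∀ Y ∈ Ioo (-1 : ℝ) 1, 0 ≤ 2 * α * (Y ^ 2 * (1 - Y ^ 2) ^ (α - 1)) :=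
    fun Y hY => have := one_sub_sq_nonneg (Ioo_subset_Icc_self hY); by positivity
  have hFTC := integral_eq_sub_of_hasDerivAt_of_nonneg (by norm_num) hH hH' hH'_nonneg
  simp only [H, intervalIntegral.integral_const_mul, integral_same] at hFTC
  norm_num [Real.zero_rpow hα.ne'] at hFTC
  rw [div_mul_eq_mul_div, eq_div_iff (by positivity)]
  linarith

end

theorem integral_div_one_sub_mul_sq_le {f : ℝ → ℝ} {t : ℝ}
    (hf : IntervalIntegrable f volume (-1) 1) (hf0 : ∀ Y ∈ Icc (-1 : ℝ) 1, 0 ≤ f Y)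
    (ht0 : 0 ≤ t) (ht1 : t < 1) :
    ∫ Y in (-1 : ℝ)..1, f Y / (1 - t * Y ^ 2) ≤ (∫ Y in (-1 : ℝ)..1, f Y) / (1 - t) := by
  have hden : ∀ Y ∈ Icc (-1 : ℝ) 1, 1 - t ≤ 1 - t * Y ^ 2 := fun Y hY => by
    nlinarith [mul_nonneg ht0 (one_sub_sq_nonneg hY)]
  have hint : IntervalIntegrable (fun Y => f Y / (1 - t * Y ^ 2)) volume (-1) 1 := by
    simp_rw [div_eq_mul_inv]
    refine hf.mul_continuousOn (ContinuousOn.inv₀ (by fun_prop) fun Y hY => ?_)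
    rw [uIcc_of_le (by norm_num)] at hY
    linarith [hden Y hY]
  rw [← intervalIntegral.integral_div]
  exact integral_mono_on (by norm_num) hint (hf.div_const _) fun Y hY =>
    div_le_div_of_nonneg_left (hf0 Y hY) (by linarith) (hden Y hY)

theorem integral_with_denominator_bound_general (p : ℝ) (hp : 1 < p) (d x : ℝ)
    (hx : 0 < x) (hxd : x * |d| < 1) :
    (∫ Y in (-1 : ℝ)..1, Y ^ 2 * (1 - Y ^ 2) ^ (2 / (p - 1)) / (1 - x ^ 2 * d ^ 2 * Y ^ 2))
      ≤ (4 / ((3 * p + 1) * (1 - x ^ 2 * d ^ 2)))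
        * ∫ Y in (-1 : ℝ)..1, Y ^ 2 * (1 - Y ^ 2) ^ (2 / (p - 1) - 1) := by
  have hp1 : 0 < p - 1 := by linarith
  have hα : 0 < 2 / (p - 1) := by positivity
  have hxd2 : x ^ 2 * d ^ 2 < 1 := by
    rw [← sq_abs d, ← mul_pow]
    nlinarith [mul_nonneg hx.le (abs_nonneg d)]
  have hcoeff : 2 * (2 / (p - 1)) / (2 * (2 / (p - 1)) + 3) = 4 / (3 * p + 1) := by
    field_simp
    ring
  have hf : IntervalIntegrable (fun Y : ℝ => Y ^ 2 * (1 - Y ^ 2) ^ (2 / (p - 1))) volume (-1) 1 :=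
    ((continuous_pow 2).mul (continuous_one_sub_sq_rpow hα.le)).intervalIntegrable _ _
  have hf0 : ∀ Y ∈ Icc (-1 : ℝ) 1, 0 ≤ Y ^ 2 * (1 - Y ^ 2) ^ (2 / (p - 1)) := fun Y hY =>
    mul_nonneg (sq_nonneg Y) (Real.rpow_nonneg (one_sub_sq_nonneg hY) _)
  calc _ ≤ (∫ Y in (-1 : ℝ)..1, Y ^ 2 * (1 - Y ^ 2) ^ (2 / (p - 1))) / (1 - x ^ 2 * d ^ 2) :=
        integral_div_one_sub_mul_sq_le hf hf0 (by positivity) hxd2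
    _ = _ := by
        rw [integral_sq_mul_one_sub_sq_rpow hα, hcoeff, mul_div_right_comm, div_div]

theorem integral_with_denominator_bound (p : ℝ) (hp : 1 < p) (d x : ℝ)
    (hd : d ∈ Set.Ioo (-1 : ℝ) 1) (hx : 0 < x) (hxd : x * |d| < 1) :
    (∫ Y in (-1 : ℝ)..1, Y ^ 2 * (1 - Y ^ 2) ^ (2 / (p - 1)) / (1 - x ^ 2 * d ^ 2 * Y ^ 2))
      ≤ (4 / ((3 * p + 1) * (1 - x ^ 2 * d ^ 2)))
        * ∫ Y in (-1 : ℝ)..1, Y ^ 2 * (1 - Y ^ 2) ^ (2 / (p - 1) - 1) :=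
  integral_with_denominator_bound_general p hp d x hx hxd
end

section
/- For any d ∈ (-1,1) and x ∈ (0, 1/|d|) (any x > 0 if d = 0) and p > 1, the function g_d(x) = 1 - (1-x)(x d²(p-1) + p+1)/((3p+1)(1 - x²d²)) satisfies g_d(x) ≥ g_d(0) = 2p/(3p+1) > 0. -/
theorem g_d_lower_bound (p : ℝ) (hp : 1 < p) (d x : ℝ) (hd : d ∈ Set.Ioo (-1 : ℝ) 1)
    (hx : 0 < x) (hxd : x * |d| < 1) :
    (2 * p / (3 * p + 1)
        ≤ 1 - (1 - x) * (x * d ^ 2 * (p - 1) + p + 1) / ((3 * p + 1) * (1 - x ^ 2 * d ^ 2))) ∧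
      (1 - (1 - 0) * (0 * d ^ 2 * (p - 1) + p + 1) / ((3 * p + 1) * (1 - 0 ^ 2 * d ^ 2))
        = 2 * p / (3 * p + 1)) ∧
      0 < 2 * p / (3 * p + 1) := by
  obtain ⟨hd1, hd2⟩ := hd
  have habs : |d| < 1 := abs_lt.mpr ⟨hd1, hd2⟩
  have habs0 : 0 ≤ |d| := abs_nonneg d
  have hdsq : d ^ 2 ≤ |d| := by
    rw [← sq_abs d]; nlinarith
  have hxd2 : x ^ 2 * d ^ 2 < 1 := by
    have : (x * |d|) ^ 2 < 1 := by nlinarith [mul_nonneg hx.le habs0]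
    nlinarith [sq_abs d]
  have hxd3 : x * d ^ 2 ≤ |d| := by
    have : x * |d| * |d| ≤ |d| := by nlinarith
    nlinarith [sq_abs d]
  have h3p : (0:ℝ) < 3 * p + 1 := by linarith
  have hD : (0:ℝ) < (3 * p + 1) * (1 - x ^ 2 * d ^ 2) := by nlinarith
  refine ⟨?_, by norm_num; field_simp; ring, by positivity⟩
  have h1 : (1 - x) * (x * d ^ 2 * (p - 1) + p + 1) / ((3 * p + 1) * (1 - x ^ 2 * d ^ 2))
      ≤ (p + 1) / (3 * p + 1) := by
    rw [div_le_div_iff₀ hD h3p]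
    have hbr : 0 ≤ (p + 1) - d ^ 2 * (p - 1) - 2 * (x * d ^ 2) := by
      have h2 : d ^ 2 * (p - 1) ≤ p - 1 := by nlinarith [sq_abs d]
      nlinarith
    nlinarith [mul_nonneg hx.le hbr, mul_nonneg (mul_nonneg hx.le hbr) h3p.le]
  have h2 : (2 * p) / (3 * p + 1) = 1 - (p + 1) / (3 * p + 1) := by
    field_simp; ring
  linarith
end

section
/- For p > 1 and d ∈ (-1,1), the energy E(κ(d,·), 0) with E(V₁,V₂) = ∫_{-1}^{1} ( (1/2)V₂² + (1/2)(∂_y V₁)²(1-y²) + ((p+1)/(p-1)²)V₁² - (1/(p+1))|V₁|^{p+1} ) ρ dy, ρ(y) = (1-y²)^{2/(p-1)}, is independent of d: E(κ(d,·),0) = E(κ₀, 0) for all d ∈ (-1,1), where κ₀ is the constant function (2(p+1)/(p-1)²)^{1/(p-1)}. -/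
noncomputable def kappa0 (p : ℝ) : ℝ := (2 * (p + 1) / (p - 1) ^ 2) ^ (1 / (p - 1))

noncomputable def kap (p d y : ℝ) : ℝ :=
  kappa0 p * (1 - d ^ 2) ^ (1 / (p - 1)) / (1 + d * y) ^ (2 / (p - 1))

/-- the energy functional E(V₁,V₂) -/
noncomputable def En (p : ℝ) (V₁ V₂ : ℝ → ℝ) : ℝ :=
  ∫ y in (-1 : ℝ)..1,
    ((1 / 2) * V₂ y ^ 2 + (1 / 2) * (deriv V₁ y) ^ 2 * (1 - y ^ 2)
        + ((p + 1) / (p - 1) ^ 2) * V₁ y ^ 2 - (1 / (p + 1)) * |V₁ y| ^ (p + 1))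
      * (1 - y ^ 2) ^ (2 / (p - 1))

/-! The boost `y = (t - d) / (1 - d t)` maps `[-1, 1]` onto itself and carries `κ(d, y)² ρ(y)`
to `κ₀² ρ(t)`. After this substitution the energy density of `κ(d, ·)`, times the Jacobian
`(1 - d²) / (1 - d t)²`, differs from the constant density of `κ₀` by the derivative of a
function vanishing at `t = ±1`, so the two energies agree. -/

open Real Set MeasureTheory intervalIntegral

noncomputable def weight (p y : ℝ) : ℝ := (1 - y ^ 2) ^ (2 / (p - 1))

noncomputable def energyDensity (p : ℝ) (V₁ V₂ : ℝ → ℝ) (y : ℝ) : ℝ :=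
  ((1 / 2) * V₂ y ^ 2 + (1 / 2) * (deriv V₁ y) ^ 2 * (1 - y ^ 2)
      + ((p + 1) / (p - 1) ^ 2) * V₁ y ^ 2 - (1 / (p + 1)) * |V₁ y| ^ (p + 1)) * weight p y

lemma continuous_weight {p : ℝ} (hp : 1 < p) : Continuous (weight p) :=
  (by fun_prop : Continuous fun y : ℝ => 1 - y ^ 2).rpow_const
    fun _ => Or.inr (div_pos two_pos (sub_pos.2 hp)).le

lemma one_add_mul_pos {d t : ℝ} (hd : d ∈ Ioo (-1) 1) (ht : t ∈ Icc (-1) 1) :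
    0 < 1 + d * t := by
  have : |d * t| < 1 := by
    rw [abs_mul]
    exact mul_lt_one_of_nonneg_of_lt_one_left (abs_nonneg d) (abs_lt.2 hd) (abs_le.2 ht)
  linarith [neg_abs_le (d * t)]

lemma one_sub_mul_pos {d t : ℝ} (hd : d ∈ Ioo (-1) 1) (ht : t ∈ Icc (-1) 1) :
    0 < 1 - d * t := by
  simpa [sub_eq_add_neg] using one_add_mul_pos ⟨neg_lt_neg hd.2, neg_lt.1 hd.1⟩ ht

lemma abs_rpow_add_one_eq_sq_mul {x : ℝ} (hx : 0 < x) (p : ℝ) :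
    |x| ^ (p + 1) = x ^ 2 * x ^ (p - 1) := by
  rw [abs_of_pos hx, ← rpow_two, ← rpow_add hx]
  ring_nf

lemma hasDerivAt_one_sub_mul (d t : ℝ) : HasDerivAt (fun t => 1 - d * t) (-d) t := by
  simpa using ((hasDerivAt_id t).const_mul d).const_sub 1

noncomputable def mobius (d t : ℝ) : ℝ := (t - d) / (1 - d * t)

section mobius

variable {d t : ℝ}

lemma mobius_neg_one (hd : d ≠ -1) : mobius d (-1) = -1 := by
  have : 1 + d ≠ 0 := fun h => hd (by linarith)
  rw [mobius, div_eq_iff (by simpa [add_comm] using this)]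
  ring

lemma mobius_one (hd : d ≠ 1) : mobius d 1 = 1 := by
  rw [mobius, mul_one, div_self (sub_ne_zero.2 hd.symm)]

lemma one_add_mul_mobius (h : 1 - d * t ≠ 0) :
    1 + d * mobius d t = (1 - d ^ 2) / (1 - d * t) := by
  rw [mobius]
  field_simp
  ring

lemma one_sub_mobius_sq (h : 1 - d * t ≠ 0) :
    1 - mobius d t ^ 2 = (1 - t ^ 2) * (1 - d ^ 2) / (1 - d * t) ^ 2 := by
  rw [mobius, div_pow, eq_div_iff (pow_ne_zero 2 h), sub_mul, div_mul_cancel₀ _ (pow_ne_zero 2 h)]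
  ring

lemma hasDerivAt_mobius (h : 1 - d * t ≠ 0) :
    HasDerivAt (mobius d) ((1 - d ^ 2) / (1 - d * t) ^ 2) t := by
  have hnum : HasDerivAt (fun t => t - d) 1 t := (hasDerivAt_id t).sub_const d
  exact (hnum.div (hasDerivAt_one_sub_mul d t) h).congr_deriv (by ring)

lemma mapsTo_mobius (hd : d ∈ Ioo (-1) 1) : MapsTo (mobius d) (Icc (-1) 1) (Icc (-1) 1) := by
  intro t ht
  have h := one_sub_mobius_sq (one_sub_mul_pos hd ht).ne'
  have hpos : 0 ≤ 1 - mobius d t ^ 2 := by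
    rw [h]
    have : 0 ≤ 1 - t ^ 2 := by nlinarith [ht.1, ht.2]
    have : 0 ≤ 1 - d ^ 2 := by nlinarith [hd.1, hd.2]
    positivity
  exact abs_le_of_sq_le_sq' (by linarith) zero_le_one

lemma integral_comp_mobius (hd : d ∈ Ioo (-1) 1) {g : ℝ → ℝ}
    (hg : ContinuousOn g (Icc (-1) 1)) :
    ∫ t in (-1)..1, g (mobius d t) * ((1 - d ^ 2) / (1 - d * t) ^ 2) = ∫ y in (-1)..1, g y := by
  have hI : uIcc (-1 : ℝ) 1 = Icc (-1) 1 := uIcc_of_le (by norm_num)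
  have h := integral_comp_mul_deriv' (g := g)
    (fun t ht => hasDerivAt_mobius (one_sub_mul_pos hd (hI ▸ ht)).ne')
    (continuousOn_const.div (by fun_prop) fun t ht =>
      pow_ne_zero 2 (one_sub_mul_pos hd (hI ▸ ht)).ne')
    (hg.mono (hI ▸ (mapsTo_mobius hd).image_subset))
  rwa [mobius_neg_one hd.1.ne', mobius_one hd.2.ne] at h

lemma one_add_mul_mobius_pos (hd : d ∈ Ioo (-1) 1) (ht : t ∈ Icc (-1) 1) :
    0 < 1 + d * mobius d t := by
  have hd₂ : 0 < 1 - d ^ 2 := sub_pos.2 ((sq_lt_one_iff_abs_lt_one d).2 (abs_lt.2 hd))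
  rw [one_add_mul_mobius (one_sub_mul_pos hd ht).ne']
  exact div_pos hd₂ (one_sub_mul_pos hd ht)

end mobius

section soliton

variable {p d y : ℝ}

lemma kappa0_pos (hp : 1 < p) : 0 < kappa0 p :=
  rpow_pos_of_pos (div_pos (by linarith) (pow_pos (sub_pos.2 hp) 2)) _

lemma kappa0_rpow_sub_one (hp : 1 < p) : kappa0 p ^ (p - 1) = 2 * (p + 1) / (p - 1) ^ 2 := by
  rw [kappa0, one_div, rpow_inv_rpow (div_pos (by linarith) (pow_pos (sub_pos.2 hp) 2)).le
    (sub_pos.2 hp).ne']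

lemma kap_pos (hp : 1 < p) (hd : d ^ 2 < 1) (hy : 0 < 1 + d * y) : 0 < kap p d y :=
  div_pos (mul_pos (kappa0_pos hp) (rpow_pos_of_pos (sub_pos.2 hd) _)) (rpow_pos_of_pos hy _)

lemma kap_rpow_sub_one (hp : 1 < p) (hd : d ^ 2 < 1) (hy : 0 < 1 + d * y) :
    kap p d y ^ (p - 1) = 2 * (p + 1) / (p - 1) ^ 2 * (1 - d ^ 2) / (1 + d * y) ^ 2 := by
  have hp₁ : p - 1 ≠ 0 := (sub_pos.2 hp).ne'
  have hd₁ : 0 < 1 - d ^ 2 := sub_pos.2 hd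
  rw [kap, div_rpow (by positivity [kappa0_pos hp]) (rpow_pos_of_pos hy _).le,
    mul_rpow (kappa0_pos hp).le (rpow_pos_of_pos hd₁ _).le, kappa0_rpow_sub_one hp,
    ← rpow_mul hd₁.le, ← rpow_mul hy.le, one_div_mul_cancel hp₁, rpow_one,
    div_mul_cancel₀ _ hp₁, rpow_two, mul_div_assoc]

lemma hasDerivAt_kap (hy : 0 < 1 + d * y) :
    HasDerivAt (kap p d) (-(2 / (p - 1)) * d / (1 + d * y) * kap p d y) y := by
  have hw : HasDerivAt (fun y => 1 + d * y) d y := by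
    simpa using ((hasDerivAt_id y).const_mul d).const_add 1
  have hpow := hw.rpow_const (p := 2 / (p - 1)) (Or.inl hy.ne')
  refine ((hasDerivAt_const y (kappa0 p * (1 - d ^ 2) ^ (1 / (p - 1)))).div hpow
    (rpow_pos_of_pos hy _).ne').congr_deriv ?_
  rw [kap, rpow_sub hy, rpow_one]
  field_simp
  ring

lemma kap_sq_mul_weight (hd : d ^ 2 < 1) (hy : 0 < 1 + d * y) (hy₁ : y ^ 2 ≤ 1) :
    kap p d y ^ 2 * weight p y
      = kappa0 p ^ 2 * ((1 - d ^ 2) * (1 - y ^ 2) / (1 + d * y) ^ 2) ^ (2 / (p - 1)) := by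
  have hd₁ : 0 ≤ 1 - d ^ 2 := (sub_pos.2 hd).le
  have hy₂ : 0 ≤ 1 - y ^ 2 := sub_nonneg.2 hy₁
  have hsq : (1 - d ^ 2) ^ (2 / (p - 1)) = ((1 - d ^ 2) ^ (1 / (p - 1))) ^ 2 := by
    rw [← rpow_mul_natCast hd₁]
    ring_nf
  rw [kap, weight, div_rpow (mul_nonneg hd₁ hy₂) (by positivity), mul_rpow hd₁ hy₂, hsq,
    ← rpow_pow_comm hy.le]
  ring

lemma kap_sq_mul_weight_mobius {t : ℝ} (hd : d ∈ Ioo (-1) 1) (ht : t ∈ Icc (-1) 1) :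
    kap p d (mobius d t) ^ 2 * weight p (mobius d t) = kappa0 p ^ 2 * weight p t := by
  have hb := (one_sub_mul_pos hd ht).ne'
  have hd₂ : d ^ 2 < 1 := (sq_lt_one_iff_abs_lt_one d).2 (abs_lt.2 hd)
  have hd₃ : 1 - d ^ 2 ≠ 0 := (sub_pos.2 hd₂).ne'
  rw [kap_sq_mul_weight hd₂ (one_add_mul_mobius_pos hd ht)
      ((sq_le_one_iff_abs_le_one _).2 (abs_le.2 (mapsTo_mobius hd ht))),
    one_add_mul_mobius hb, one_sub_mobius_sq hb, weight]
  congr 2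
  field_simp

end soliton

noncomputable def energyCorrection (p d t : ℝ) : ℝ :=
  -(kappa0 p ^ 2 / (p - 1)) * d * ((1 - t ^ 2) ^ (2 / (p - 1) + 1) / (1 - d * t))

noncomputable def energyCorrectionDeriv (p d t : ℝ) : ℝ :=
  -(kappa0 p ^ 2 / (p - 1)) * d * weight p t
    * (d * (1 - t ^ 2) - 2 * (2 / (p - 1) + 1) * t * (1 - d * t)) / (1 - d * t) ^ 2

section correction

variable {p d t : ℝ}

lemma hasDerivAt_energyCorrection (hp : 1 < p) (h : 1 - d * t ≠ 0) :
    HasDerivAt (energyCorrection p d) (energyCorrectionDeriv p d t) t := by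
  have hu : HasDerivAt (fun t => 1 - t ^ 2) (-(2 * t)) t := by
    simpa using (hasDerivAt_pow 2 t).const_sub 1
  have hq : 1 ≤ 2 / (p - 1) + 1 := le_add_of_nonneg_left (div_pos two_pos (sub_pos.2 hp)).le
  have hpow := hu.rpow_const (Or.inr hq)
  have hsplit : (1 - t ^ 2) ^ (2 / (p - 1) + 1) = weight p t * (1 - t ^ 2) := by
    rcases eq_or_ne (1 - t ^ 2) 0 with h0 | h0
    · rw [weight, h0, zero_rpow (by linarith), mul_zero]
    · exact rpow_add_one h0 _
  refine ((hpow.div (hasDerivAt_one_sub_mul d t) h).const_mul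
    (-(kappa0 p ^ 2 / (p - 1)) * d)).congr_deriv ?_
  rw [add_sub_cancel_right, hsplit, energyCorrectionDeriv, weight]
  field_simp
  ring

lemma continuousOn_energyCorrectionDeriv (hp : 1 < p) (hd : d ∈ Ioo (-1) 1) :
    ContinuousOn (energyCorrectionDeriv p d) (Icc (-1) 1) := by
  intro t ht
  have hb := one_sub_mul_pos hd ht
  have hw := (continuous_weight hp).continuousAt (x := t)
  refine ContinuousAt.continuousWithinAt ?_
  unfold energyCorrectionDeriv
  fun_prop (disch := positivity)

lemma integral_energyCorrectionDeriv (hp : 1 < p) (hd : d ∈ Ioo (-1) 1) :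
    ∫ t in (-1)..1, energyCorrectionDeriv p d t = 0 := by
  have hI : uIcc (-1 : ℝ) 1 = Icc (-1) 1 := uIcc_of_le (by norm_num)
  have hq : 2 / (p - 1) + 1 ≠ 0 := by linarith [div_pos two_pos (sub_pos.2 hp)]
  rw [integral_eq_sub_of_hasDerivAt
    (fun t ht => hasDerivAt_energyCorrection hp (one_sub_mul_pos hd (hI ▸ ht)).ne')
    ((continuousOn_energyCorrectionDeriv hp hd).intervalIntegrable_of_Icc (by norm_num))]
  simp [energyCorrection, zero_rpow hq]

end correction

section energy

variable {p d y t : ℝ}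

lemma energyDensity_const (hp : 1 < p) (t : ℝ) :
    energyDensity p (fun _ => kappa0 p) (fun _ => 0) t = kappa0 p ^ 2 / (p - 1) * weight p t := by
  have hp₁ : p - 1 ≠ 0 := (sub_pos.2 hp).ne'
  have hp₂ : p + 1 ≠ 0 := by linarith
  rw [energyDensity, deriv_const, abs_rpow_add_one_eq_sq_mul (kappa0_pos hp),
    kappa0_rpow_sub_one hp]
  field_simp
  ring

lemma energyDensity_kap (hp : 1 < p) (hd : d ^ 2 < 1) (hy : 0 < 1 + d * y) :
    energyDensity p (kap p d) (fun _ => 0) y = kap p d y ^ 2 * weight p y *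
      ((2 / (p - 1)) ^ 2 * (d ^ 2 * (1 - y ^ 2) - (1 - d ^ 2)) / (2 * (1 + d * y) ^ 2)
        + (p + 1) / (p - 1) ^ 2) := by
  have hp₁ : p - 1 ≠ 0 := (sub_pos.2 hp).ne'
  have hp₂ : p + 1 ≠ 0 := by linarith
  rw [energyDensity, (hasDerivAt_kap hy).deriv, abs_rpow_add_one_eq_sq_mul (kap_pos hp hd hy),
    kap_rpow_sub_one hp hd hy]
  field_simp
  ring

lemma continuousOn_energyDensity_kap (hp : 1 < p) (hd : d ∈ Ioo (-1) 1) :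
    ContinuousOn (energyDensity p (kap p d) fun _ => 0) (Icc (-1) 1) := by
  have hd₂ : d ^ 2 < 1 := (sq_lt_one_iff_abs_lt_one d).2 (abs_lt.2 hd)
  refine ContinuousOn.congr (fun y hy => ContinuousAt.continuousWithinAt ?_)
    fun y hy => energyDensity_kap hp hd₂ (one_add_mul_pos hd hy)
  have hy₁ := one_add_mul_pos hd hy
  have hR : ContinuousAt (fun y => (2 / (p - 1)) ^ 2 * (d ^ 2 * (1 - y ^ 2) - (1 - d ^ 2))
      / (2 * (1 + d * y) ^ 2) + (p + 1) / (p - 1) ^ 2) y :=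
    (ContinuousAt.div (by fun_prop) (by fun_prop) (by positivity)).add continuousAt_const
  exact (((hasDerivAt_kap hy₁).continuousAt.pow 2).mul (continuous_weight hp).continuousAt).mul hR

lemma energyDensity_kap_comp_mobius (hp : 1 < p) (hd : d ∈ Ioo (-1) 1) (ht : t ∈ Icc (-1) 1) :
    energyDensity p (kap p d) (fun _ => 0) (mobius d t) * ((1 - d ^ 2) / (1 - d * t) ^ 2)
      = energyDensity p (fun _ => kappa0 p) (fun _ => 0) t + energyCorrectionDeriv p d t := by
  have hp₁ : p - 1 ≠ 0 := (sub_pos.2 hp).ne'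
  have hb := (one_sub_mul_pos hd ht).ne'
  have hd₂ : d ^ 2 < 1 := (sq_lt_one_iff_abs_lt_one d).2 (abs_lt.2 hd)
  have hd₃ : 1 - d ^ 2 ≠ 0 := (sub_pos.2 hd₂).ne'
  rw [energyDensity_kap hp hd₂ (one_add_mul_mobius_pos hd ht), kap_sq_mul_weight_mobius hd ht,
    energyDensity_const hp, energyCorrectionDeriv, one_sub_mobius_sq hb, one_add_mul_mobius hb]
  field_simp
  ring

end energy

theorem energy_independent_of_d (p : ℝ) (hp : 1 < p) (d : ℝ)
    (hd : d ∈ Set.Ioo (-1 : ℝ) 1) :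
    En p (kap p d) (fun _ => 0) = En p (fun _ => kappa0 p) (fun _ => 0) := by
  have hI : uIcc (-1 : ℝ) 1 = Icc (-1) 1 := uIcc_of_le (by norm_num)
  have hconst :
      IntervalIntegrable (energyDensity p (fun _ => kappa0 p) fun _ => 0) volume (-1) 1 := by
    rw [funext (energyDensity_const hp)]
    exact (continuous_const.mul (continuous_weight hp)).intervalIntegrable _ _
  calc En p (kap p d) (fun _ => 0)
      = ∫ t in (-1)..1,
          energyDensity p (kap p d) (fun _ => 0) (mobius d t) * ((1 - d ^ 2) / (1 - d * t) ^ 2) :=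
        (integral_comp_mobius hd (continuousOn_energyDensity_kap hp hd)).symm
    _ = ∫ t in (-1)..1,
          (energyDensity p (fun _ => kappa0 p) (fun _ => 0) t + energyCorrectionDeriv p d t) :=
        integral_congr fun t ht => energyDensity_kap_comp_mobius hp hd (hI ▸ ht)
    _ = En p (fun _ => kappa0 p) (fun _ => 0) := by
        rw [integral_add hconst
          ((continuousOn_energyCorrectionDeriv hp hd).intervalIntegrable_of_Icc (by norm_num)),
          integral_energyCorrectionDeriv hp hd, add_zero]
        rfl
end

section
/- For p > 1 there is a constant C₀ > 0 such that for all functions r₁ in the weighted space H₀ (with norm ‖r₁‖²_{H₀} = ∫_{-1}^{1}(r₁² + (r₁')²(1-y²))ρ dy, ρ = (1-y²)^{2/(p-1)}), the weighted sup bound ‖r₁ (1-y²)^{1/(p-1)}‖_{L^∞(-1,1)} ≤ C₀ ‖r₁‖_{H₀} holds. -/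
/-!
With `α = 2/(p-1)`, `G = r²(1-y²)^α`, `F = (r² + r'²(1-y²))(1-y²)^α` and `K = hardyConst α`,
the derivative `G' = (2rr'(1-y²) - 2αy r²)(1-y²)^(α-1)` satisfies `G' ≤ K F` on `(-1/2, 1)`
and `-G' ≤ K F` on `(-1, 1/2)`: the dangerous term `-2αy r²(1-y²)^(α-1)` has the good sign
near the endpoint that it approaches. Averaging `F` over `(-1/2, 1/2)`, an interval of length
one, gives a point `y₀` with `G y₀ ≤ ∫ F`, and the one-sided fundamental theorem of calculus
from `y₀` to `y` (which needs no integrability of `G'`) gives `G y ≤ (1 + K) ∫ F`.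
-/

open MeasureTheory Set

namespace HardySobolev

noncomputable def weightedSq (α : ℝ) (r : ℝ → ℝ) (t : ℝ) : ℝ :=
  r t ^ 2 * (1 - t ^ 2) ^ α

noncomputable def weightedSqDeriv (α : ℝ) (r : ℝ → ℝ) (t : ℝ) : ℝ :=
  (2 * r t * deriv r t * (1 - t ^ 2) - 2 * α * t * r t ^ 2) * (1 - t ^ 2) ^ (α - 1)

noncomputable def energyDensity (α : ℝ) (r : ℝ → ℝ) (t : ℝ) : ℝ :=
  (r t ^ 2 + deriv r t ^ 2 * (1 - t ^ 2)) * (1 - t ^ 2) ^ α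

noncomputable def hardyConst (α : ℝ) : ℝ := 4 / 3 + 4 / 3 * α + 1 / α

lemma hardyConst_pos {α : ℝ} (hα : 0 < α) : 0 < hardyConst α := by
  unfold hardyConst; positivity

lemma one_sub_sq_pos {t : ℝ} (ht : t ∈ Ioo (-1 : ℝ) 1) : 0 < 1 - t ^ 2 := by
  nlinarith [ht.1, ht.2]

/-- On `(-1/2, 1/2]` the factor `x = 1 - t²` is at least `3/4`; on `(1/2, 1)` the term `-2αt a²`
absorbs the `α a²` of Young's inequality `2abx ≤ α a² + b²x²/α`. -/
lemma two_mul_mul_sub_le {α t : ℝ} (hα : 0 < α) (ht : -(1 / 2) < t) (ht' : t < 1) (a b : ℝ) :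
    2 * a * b * (1 - t ^ 2) - 2 * α * t * a ^ 2
      ≤ hardyConst α * (a ^ 2 + b ^ 2 * (1 - t ^ 2)) * (1 - t ^ 2) := by
  set x := 1 - t ^ 2
  have hx : 0 < x := by nlinarith
  have hsplit : hardyConst α * (a ^ 2 + b ^ 2 * x) * x
      = (4 / 3 + 4 / 3 * α) * (a ^ 2 + b ^ 2 * x) * x + (a ^ 2 + b ^ 2 * x) * x / α := by
    unfold hardyConst; field_simp
  have hfirst : 0 ≤ (4 / 3 + 4 / 3 * α) * (a ^ 2 + b ^ 2 * x) * x := by positivity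
  have hsecond : 0 ≤ (a ^ 2 + b ^ 2 * x) * x / α := by positivity
  rcases le_or_gt t (1 / 2) with h | h
  · have hx34 : 3 / 4 ≤ x := by nlinarith
    have : 2 * a * b * x - 2 * α * t * a ^ 2
        ≤ (4 / 3 + 4 / 3 * α) * (a ^ 2 + b ^ 2 * x) * x := by
      nlinarith [sq_nonneg (a - b * x),
        mul_nonneg (mul_nonneg hα.le (sq_nonneg a)) (by linarith : 0 ≤ 1 + 2 * t),
        mul_nonneg (mul_nonneg hα.le (sq_nonneg a)) (by linarith : 0 ≤ 4 * x - 3),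
        mul_nonneg (sq_nonneg a) (by linarith : 0 ≤ 4 * x - 3),
        mul_nonneg (mul_nonneg hα.le (sq_nonneg b)) (sq_nonneg x)]
    linarith
  · have young : 2 * a * b * x ≤ α * a ^ 2 + b ^ 2 * x ^ 2 / α := by
      have e : (α * a - b * x) ^ 2 / α = α * a ^ 2 + b ^ 2 * x ^ 2 / α - 2 * a * b * x := by
        field_simp; ring
      linarith [e ▸ (by positivity : 0 ≤ (α * a - b * x) ^ 2 / α)]
    have : b ^ 2 * x ^ 2 / α ≤ (a ^ 2 + b ^ 2 * x) * x / α := by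
      gcongr ?_ / _; nlinarith [sq_nonneg a]
    nlinarith [mul_nonneg (mul_nonneg hα.le (sq_nonneg a)) (by linarith : 0 ≤ 2 * t - 1)]

lemma one_sub_sq_rpow_eq {t : ℝ} (ht : t ∈ Ioo (-1 : ℝ) 1) (α : ℝ) :
    (1 - t ^ 2) ^ α = (1 - t ^ 2) ^ (α - 1) * (1 - t ^ 2) := by
  rw [← Real.rpow_add_one (one_sub_sq_pos ht).ne', sub_add_cancel]

lemma hasDerivAt_weightedSq (α : ℝ) {r : ℝ → ℝ} {t : ℝ} (ht : t ∈ Ioo (-1 : ℝ) 1)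
    (hr : DifferentiableAt ℝ r t) :
    HasDerivAt (weightedSq α r) (weightedSqDeriv α r t) t := by
  have hx := one_sub_sq_pos ht
  have hpow :
      HasDerivAt (fun s => (1 - s ^ 2) ^ α) (-(2 * t) * α * (1 - t ^ 2) ^ (α - 1)) t := by
    have h1 : HasDerivAt (fun s : ℝ => 1 - s ^ 2) (-(2 * t)) t := by
      simpa using (hasDerivAt_pow 2 t).const_sub 1
    exact h1.rpow_const (Or.inl hx.ne')
  have hsq : HasDerivAt (fun s => r s ^ 2) (2 * r t * deriv r t) t := by
    simpa using hr.hasDerivAt.fun_pow 2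
  refine (hsq.mul hpow).congr_deriv ?_
  rw [weightedSqDeriv, one_sub_sq_rpow_eq ht α]
  ring

lemma weightedSqDeriv_le {α : ℝ} (hα : 0 < α) (r : ℝ → ℝ) {t : ℝ}
    (ht : t ∈ Ioo (-(1 / 2) : ℝ) 1) :
    weightedSqDeriv α r t ≤ hardyConst α * energyDensity α r t := by
  have ht' : t ∈ Ioo (-1 : ℝ) 1 := ⟨by linarith [ht.1], ht.2⟩
  have hX : 0 ≤ (1 - t ^ 2) ^ (α - 1) := Real.rpow_nonneg (one_sub_sq_pos ht').le _
  calc weightedSqDeriv α r t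
      ≤ hardyConst α * (r t ^ 2 + deriv r t ^ 2 * (1 - t ^ 2)) * (1 - t ^ 2)
          * (1 - t ^ 2) ^ (α - 1) :=
        mul_le_mul_of_nonneg_right (two_mul_mul_sub_le hα ht.1 ht.2 _ _) hX
    _ = hardyConst α * energyDensity α r t := by
        rw [energyDensity, one_sub_sq_rpow_eq ht' α]; ring

lemma neg_weightedSqDeriv_le {α : ℝ} (hα : 0 < α) (r : ℝ → ℝ) {t : ℝ}
    (ht : t ∈ Ioo (-1 : ℝ) (1 / 2)) :
    -weightedSqDeriv α r t ≤ hardyConst α * energyDensity α r t := by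
  have ht' : t ∈ Ioo (-1 : ℝ) 1 := ⟨ht.1, by linarith [ht.2]⟩
  have hX : 0 ≤ (1 - t ^ 2) ^ (α - 1) := Real.rpow_nonneg (one_sub_sq_pos ht').le _
  have key := two_mul_mul_sub_le hα (t := -t) (by linarith [ht.2]) (by linarith [ht.1])
    (r t) (-deriv r t)
  rw [neg_sq, neg_sq] at key
  calc -weightedSqDeriv α r t
      ≤ hardyConst α * (r t ^ 2 + deriv r t ^ 2 * (1 - t ^ 2)) * (1 - t ^ 2)
          * (1 - t ^ 2) ^ (α - 1) := by
        rw [weightedSqDeriv, ← neg_mul]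
        exact mul_le_mul_of_nonneg_right (by linarith) hX
    _ = hardyConst α * energyDensity α r t := by
        rw [energyDensity, one_sub_sq_rpow_eq ht' α]; ring

lemma weightedSq_le_energyDensity (α : ℝ) (r : ℝ → ℝ) {t : ℝ} (ht : t ∈ Ioo (-1 : ℝ) 1) :
    weightedSq α r t ≤ energyDensity α r t := by
  have hx := one_sub_sq_pos ht
  unfold weightedSq energyDensity
  gcongr
  exact le_add_of_nonneg_right (by positivity)

lemma energyDensity_nonneg (α : ℝ) (r : ℝ → ℝ) {t : ℝ} (ht : t ∈ Ioo (-1 : ℝ) 1) :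
    0 ≤ energyDensity α r t := by
  have hx := one_sub_sq_pos ht
  unfold energyDensity
  have := Real.rpow_nonneg hx.le α
  positivity

section Integral

variable {α : ℝ} {r : ℝ → ℝ}

lemma setIntegral_energyDensity_mono (hint : IntegrableOn (energyDensity α r) (Ioo (-1) 1))
    {s : Set ℝ} (hs : s ⊆ Ioo (-1) 1) :
    ∫ t in s, energyDensity α r t ≤ ∫ t in Ioo (-1) 1, energyDensity α r t :=
  setIntegral_mono_set hint
    ((ae_restrict_iff' measurableSet_Ioo).mpr (.of_forall fun _ ht => energyDensity_nonneg α r ht))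
    hs.eventuallyLE

lemma intervalIntegral_energyDensity_le (hint : IntegrableOn (energyDensity α r) (Ioo (-1) 1))
    {a b : ℝ} (hab : a ≤ b) (hs : Icc a b ⊆ Ioo (-1) 1) :
    ∫ t in a..b, energyDensity α r t ≤ ∫ t in Ioo (-1) 1, energyDensity α r t := by
  rw [intervalIntegral.integral_of_le hab]
  exact setIntegral_energyDensity_mono hint (Ioc_subset_Icc_self.trans hs)

lemma exists_weightedSq_le_integral (hint : IntegrableOn (energyDensity α r) (Ioo (-1) 1)) :
    ∃ y₀ ∈ Ioo (-(1 / 2) : ℝ) (1 / 2),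
      weightedSq α r y₀ ≤ ∫ t in Ioo (-1) 1, energyDensity α r t := by
  have hsub : Ioo (-(1 / 2) : ℝ) (1 / 2) ⊆ Ioo (-1) 1 :=
    Ioo_subset_Ioo (by norm_num) (by norm_num)
  have hvol : volume (Ioo (-(1 / 2) : ℝ) (1 / 2)) = 1 := by simp [Real.volume_Ioo]; norm_num
  obtain ⟨y₀, hy₀, hle⟩ := exists_le_setAverage (by simp) (by simp) (hint.mono_set hsub)
  refine ⟨y₀, hy₀, (weightedSq_le_energyDensity α r (hsub hy₀)).trans (hle.trans ?_)⟩
  rw [setAverage_eq, measureReal_def, hvol]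
  simpa using setIntegral_energyDensity_mono hint hsub

lemma weightedSq_sub_le_of_le (hα : 0 < α)
    (hr : ∀ t ∈ Ioo (-1 : ℝ) 1, DifferentiableAt ℝ r t)
    (hint : IntegrableOn (energyDensity α r) (Ioo (-1) 1)) {y₀ y : ℝ} (hy₀ : -(1 / 2) < y₀)
    (hy : y < 1) (hle : y₀ ≤ y) :
    weightedSq α r y - weightedSq α r y₀
      ≤ hardyConst α * ∫ t in Ioo (-1) 1, energyDensity α r t := by
  have hs : Icc y₀ y ⊆ Ioo (-1) 1 := Icc_subset_Ioo (by linarith) hy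
  have hderiv : ∀ t ∈ Icc y₀ y, HasDerivAt (weightedSq α r) (weightedSqDeriv α r t) t :=
    fun t ht => hasDerivAt_weightedSq α (hs ht) (hr t (hs ht))
  calc weightedSq α r y - weightedSq α r y₀
      ≤ ∫ t in y₀..y, hardyConst α * energyDensity α r t :=
        intervalIntegral.sub_le_integral_of_hasDeriv_right_of_le hle
          (fun t ht => (hderiv t ht).continuousAt.continuousWithinAt)
          (fun t ht => (hderiv t (Ioo_subset_Icc_self ht)).hasDerivWithinAt)
          ((hint.mono_set hs).const_mul _)
          (fun t ht => weightedSqDeriv_le hα r ⟨hy₀.trans ht.1, ht.2.trans hy⟩)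
    _ ≤ hardyConst α * ∫ t in Ioo (-1) 1, energyDensity α r t := by
        rw [intervalIntegral.integral_const_mul]
        exact mul_le_mul_of_nonneg_left (intervalIntegral_energyDensity_le hint hle hs)
          (hardyConst_pos hα).le

lemma weightedSq_sub_le_of_ge (hα : 0 < α)
    (hr : ∀ t ∈ Ioo (-1 : ℝ) 1, DifferentiableAt ℝ r t)
    (hint : IntegrableOn (energyDensity α r) (Ioo (-1) 1)) {y₀ y : ℝ} (hy₀ : y₀ < 1 / 2)
    (hy : -1 < y) (hle : y ≤ y₀) :
    weightedSq α r y - weightedSq α r y₀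
      ≤ hardyConst α * ∫ t in Ioo (-1) 1, energyDensity α r t := by
  have hs : Icc y y₀ ⊆ Ioo (-1) 1 := Icc_subset_Ioo hy (by linarith)
  have hderiv : ∀ t ∈ Icc y y₀, HasDerivAt (weightedSq α r) (weightedSqDeriv α r t) t :=
    fun t ht => hasDerivAt_weightedSq α (hs ht) (hr t (hs ht))
  have hftc : ∫ t in y..y₀, -(hardyConst α * energyDensity α r t)
      ≤ weightedSq α r y₀ - weightedSq α r y :=
    intervalIntegral.integral_le_sub_of_hasDeriv_right_of_le hle
      (fun t ht => (hderiv t ht).continuousAt.continuousWithinAt)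
      (fun t ht => (hderiv t (Ioo_subset_Icc_self ht)).hasDerivWithinAt)
      ((hint.mono_set hs).const_mul _).neg
      (fun t ht => neg_le.mp (neg_weightedSqDeriv_le hα r ⟨hy.trans ht.1, ht.2.trans hy₀⟩))
  rw [intervalIntegral.integral_neg, intervalIntegral.integral_const_mul] at hftc
  have := mul_le_mul_of_nonneg_left (intervalIntegral_energyDensity_le hint hle hs)
    (hardyConst_pos hα).le
  linarith

lemma weightedSq_le (hα : 0 < α)
    (hr : ∀ t ∈ Ioo (-1 : ℝ) 1, DifferentiableAt ℝ r t)
    (hint : IntegrableOn (energyDensity α r) (Ioo (-1) 1)) {y : ℝ} (hy : y ∈ Ioo (-1 : ℝ) 1) :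
    weightedSq α r y ≤ (1 + hardyConst α) * ∫ t in Ioo (-1) 1, energyDensity α r t := by
  obtain ⟨y₀, hy₀, hbase⟩ := exists_weightedSq_le_integral hint
  have hstep : weightedSq α r y - weightedSq α r y₀
      ≤ hardyConst α * ∫ t in Ioo (-1) 1, energyDensity α r t := by
    rcases le_total y₀ y with hle | hle
    · exact weightedSq_sub_le_of_le hα hr hint hy₀.1 hy.2 hle
    · exact weightedSq_sub_le_of_ge hα hr hint hy₀.2 hy.1 hle
  linarith

end Integral

end HardySobolev

open HardySobolev

theorem hardy_sobolev_weighted_sup (p : ℝ) (hp : 1 < p) :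
    ∃ C₀ > 0, ∀ r₁ : ℝ → ℝ,
      (∀ y ∈ Set.Ioo (-1 : ℝ) 1, DifferentiableAt ℝ r₁ y) →
      MeasureTheory.IntegrableOn
        (fun y => (r₁ y ^ 2 + (deriv r₁ y) ^ 2 * (1 - y ^ 2)) * (1 - y ^ 2) ^ (2 / (p - 1)))
        (Set.Ioo (-1 : ℝ) 1) →
      ∀ y ∈ Set.Ioo (-1 : ℝ) 1,
        |r₁ y| * (1 - y ^ 2) ^ (1 / (p - 1))
          ≤ C₀ * Real.sqrt (∫ y in Set.Ioo (-1 : ℝ) 1,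
              (r₁ y ^ 2 + (deriv r₁ y) ^ 2 * (1 - y ^ 2)) * (1 - y ^ 2) ^ (2 / (p - 1))) := by
  have hα : 0 < 2 / (p - 1) := div_pos two_pos (sub_pos.mpr hp)
  refine ⟨Real.sqrt (1 + hardyConst (2 / (p - 1))),
    Real.sqrt_pos.mpr (by linarith [hardyConst_pos hα]), fun r₁ hr hint y hy => ?_⟩
  have hx : 0 ≤ 1 - y ^ 2 := (one_sub_sq_pos hy).le
  have hsq : (|r₁ y| * (1 - y ^ 2) ^ (1 / (p - 1))) ^ 2 = weightedSq (2 / (p - 1)) r₁ y := by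
    rw [weightedSq, mul_pow, sq_abs, ← Real.rpow_mul_natCast hx]
    ring_nf
  calc |r₁ y| * (1 - y ^ 2) ^ (1 / (p - 1))
      = Real.sqrt (weightedSq (2 / (p - 1)) r₁ y) := by
        rw [← hsq, Real.sqrt_sq (by positivity)]
    _ ≤ _ := Real.sqrt_le_sqrt (weightedSq_le hα hr hint hy)
    _ = _ := Real.sqrt_mul (by linarith [hardyConst_pos hα]) _
end
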